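/- arXiv:2601.12869 — 4 statements merged into one kernel-verified Lean document; each statement's English description precedes it below -/
import Mathlib

section
/- Let p > 1, p' = p/(p-1), c ∈ ℝ, h ∈ L^∞(0,1), f ∈ L^1(0,1) with f > 0 lower semicontinuous on (0,1), and let y_c be the (unique, strictly positive on (0,1)) solution of the backward problem y' = p'[(c-h)(y^+)^{1/p} - f], y(1) = 0. Suppose φ : [0,1] → ℝ is absolutely continuous with φ > 0 on (0,1), φ(1) ≥ 0, and φ'(t) ≤ p'[(c - h(t))(max(φ(t),0))^{1/p} - f(t)] for a.e. t ∈ [0,1]. Then y_c(t) ≤ φ(t) for all t ∈ [0,1]. -/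
/-!
Substituting `u = x ^ θ` with `θ = 1 - 1/p = 1/p'` turns the equation into
`u' = (c - h) - f u^{-1/(p-1)}`, whose right-hand side is nondecreasing in `u`. Hence the gap
`y ^ θ - φ ^ θ` does not decrease on any interval where `φ ≤ y`. If `φ < y` somewhere, take the
first later point `T` with `y T ≤ φ T` (it exists since `y 1 = 0 ≤ φ 1`): the gap is positive
before `T` and nonpositive at `T`, a contradiction. Since `y` and `φ` are only known through
integral identities, the chain rule for `x ↦ x ^ θ` is replaced by the two one-sided bounds
that the tangent inequality of the concave power gives on fine partitions.
-/

open MeasureTheory Set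

theorem Real.rpow_sub_rpow_le_mul_sub {θ x y : ℝ} (hθ0 : 0 ≤ θ) (hθ1 : θ ≤ 1) (hx : 0 < x)
    (hy : 0 ≤ y) : y ^ θ - x ^ θ ≤ θ * x ^ (θ - 1) * (y - x) := by
  have hbern : (y / x) ^ θ ≤ 1 + θ * (y / x - 1) := by
    simpa using rpow_one_add_le_one_add_mul_self (s := y / x - 1)
      (by linarith [div_nonneg hy hx.le]) hθ0 hθ1
  have hxθ : x ^ θ = x ^ (θ - 1) * x := by
    rw [← Real.rpow_add_one hx.ne', sub_add_cancel]
  calc y ^ θ - x ^ θ = x ^ θ * (y / x) ^ θ - x ^ θ := by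
        rw [← Real.mul_rpow hx.le (div_nonneg hy hx.le), mul_div_cancel₀ _ hx.ne']
    _ ≤ x ^ θ * (1 + θ * (y / x - 1)) - x ^ θ := by gcongr
    _ = θ * x ^ (θ - 1) * (y - x) := by rw [hxθ]; field_simp; ring

theorem mul_integral_le_integral_mul_add {g F : ℝ → ℝ} {a b c ε : ℝ} (hab : a ≤ b)
    (hF : IntervalIntegrable F volume a b)
    (hgF : IntervalIntegrable (fun x => g x * F x) volume a b)
    (hg : ∀ x ∈ Icc a b, |g c - g x| ≤ ε) :
    g c * ∫ x in a..b, F x ≤ ∫ x in a..b, (g x * F x + ε * |F x|) := by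
  rw [← intervalIntegral.integral_const_mul]
  refine intervalIntegral.integral_mono_on hab (hF.const_mul _) (hgF.add (hF.abs.const_mul ε))
    fun x hx => ?_
  calc g c * F x = g x * F x + (g c - g x) * F x := by ring
    _ ≤ g x * F x + |g c - g x| * |F x| := by
        rw [← abs_mul]; gcongr; exact le_abs_self _
    _ ≤ g x * F x + ε * |F x| := by gcongr; exact hg x hx

theorem sub_le_integral_mul_add_of_forall_sub_le_mul_integral {u g F : ℝ → ℝ} {s t δ η : ℝ}
    (hst : s ≤ t) (hδ : 0 < δ) (hF : IntegrableOn F (Icc s t))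
    (hgF : IntegrableOn (fun τ => g τ * F τ) (Icc s t))
    (hgδ : ∀ x ∈ Icc s t, ∀ y ∈ Icc s t, dist x y < δ → dist (g x) (g y) < η)
    (hu : ∀ a ∈ Icc s t, ∀ b ∈ Icc s t, a ≤ b →
      ∃ c ∈ Icc a b, u b - u a ≤ g c * ∫ τ in a..b, F τ) :
    u t - u s ≤ ∫ τ in s..t, (g τ * F τ + η * |F τ|) := by
  have hint : ∀ {G : ℝ → ℝ}, IntegrableOn G (Icc s t) → ∀ a ∈ Icc s t, ∀ b ∈ Icc s t,
      IntervalIntegrable G volume a b := fun hG a ha b hb =>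
    (hG.mono_set (uIcc_subset_Icc ha hb)).intervalIntegrable
  have hs : s ∈ Icc s t := left_mem_Icc.2 hst
  have hstep : ∀ n : ℕ, ∀ x ∈ Icc s t, x ≤ s + n * (δ / 2) →
      u x - u s ≤ ∫ τ in s..x, (g τ * F τ + η * |F τ|) := by
    intro n
    induction n with
    | zero => intro x hx hxs; simp [le_antisymm hxs (by simpa using hx.1)]
    | succ n ih =>
      intro x hx hxn
      push_cast at hxn
      set x' := max s (x - δ / 2)
      have hx' : x' ∈ Icc s t := ⟨le_max_left _ _, max_le hst (by linarith [hx.2])⟩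
      have hx'x : x' ≤ x := max_le hx.1 (by linarith)
      have hprev := ih x' hx' (max_le (by nlinarith [n.cast_nonneg (α := ℝ)]) (by linarith))
      obtain ⟨c, hc, hcu⟩ := hu x' hx' x hx hx'x
      have hpiece := mul_integral_le_integral_mul_add (g := g) (c := c) (ε := η) hx'x
        (hint hF x' hx' x hx) (hint hgF x' hx' x hx) fun z hz => by
          refine (hgδ c ⟨hx'.1.trans hc.1, hc.2.trans hx.2⟩ z
            ⟨hx'.1.trans hz.1, hz.2.trans hx.2⟩ ?_).le
          rw [Real.dist_eq, abs_sub_lt_iff]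
          constructor <;> linarith [le_max_right s (x - δ / 2), hc.1, hc.2, hz.1, hz.2]
      rw [← intervalIntegral.integral_add_adjacent_intervals
        ((hint hgF s hs x' hx').add ((hint hF s hs x' hx').abs.const_mul η))
        ((hint hgF x' hx' x hx).add ((hint hF x' hx' x hx).abs.const_mul η))]
      linarith
  obtain ⟨n, hn⟩ := exists_nat_ge ((t - s) / (δ / 2))
  exact hstep n t (right_mem_Icc.2 hst) (by rw [div_le_iff₀ (by positivity)] at hn; linarith)

theorem sub_le_integral_mul_of_forall_sub_le_mul_integral {u g F : ℝ → ℝ} {s t : ℝ}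
    (hst : s ≤ t) (hg : ContinuousOn g (Icc s t)) (hF : IntegrableOn F (Icc s t))
    (hu : ∀ a ∈ Icc s t, ∀ b ∈ Icc s t, a ≤ b →
      ∃ c ∈ Icc a b, u b - u a ≤ g c * ∫ τ in a..b, F τ) :
    u t - u s ≤ ∫ τ in s..t, g τ * F τ := by
  have hgF : IntegrableOn (fun τ => g τ * F τ) (Icc s t) := hF.continuousOn_mul hg isCompact_Icc
  have hFst : IntervalIntegrable F volume s t :=
    (intervalIntegrable_iff_integrableOn_Icc_of_le hst).2 hF
  set C := ∫ τ in s..t, |F τ|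
  have hC : 0 ≤ C := intervalIntegral.integral_nonneg hst fun _ _ => abs_nonneg _
  refine le_of_forall_pos_le_add fun ε hε => ?_
  obtain ⟨δ, hδ, hgδ⟩ := Metric.uniformContinuousOn_iff.1
    (isCompact_Icc.uniformContinuousOn_of_continuous hg) (ε / (C + 1)) (by positivity)
  have hsum := sub_le_integral_mul_add_of_forall_sub_le_mul_integral hst hδ hF hgF hgδ hu
  rw [intervalIntegral.integral_add ((intervalIntegrable_iff_integrableOn_Icc_of_le hst).2 hgF)
    (hFst.abs.const_mul _), intervalIntegral.integral_const_mul] at hsum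
  have hεC : ε / (C + 1) * C ≤ ε := by
    rw [div_mul_eq_mul_div, div_le_iff₀ (by positivity)]; nlinarith
  linarith

theorem continuousOn_mul_rpow_sub_one {θ s t : ℝ} {φ : ℝ → ℝ} (hφ : ∀ x ∈ Icc s t, 0 < φ x)
    (hφc : ContinuousOn φ (Icc s t)) : ContinuousOn (fun x => θ * φ x ^ (θ - 1)) (Icc s t) :=
  continuousOn_const.mul (hφc.rpow_const fun x hx => Or.inl (hφ x hx).ne')

theorem rpow_sub_rpow_le_integral_of_sub_le_integral {θ s t : ℝ} {φ F : ℝ → ℝ} (hθ0 : 0 ≤ θ)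
    (hθ1 : θ ≤ 1) (hst : s ≤ t) (hφ : ∀ x ∈ Icc s t, 0 < φ x) (hφc : ContinuousOn φ (Icc s t))
    (hF : IntegrableOn F (Icc s t))
    (hsup : ∀ a ∈ Icc s t, ∀ b ∈ Icc s t, a ≤ b → φ b - φ a ≤ ∫ τ in a..b, F τ) :
    φ t ^ θ - φ s ^ θ ≤ ∫ τ in s..t, θ * φ τ ^ (θ - 1) * F τ := by
  refine sub_le_integral_mul_of_forall_sub_le_mul_integral (u := fun x => φ x ^ θ) hst
    (continuousOn_mul_rpow_sub_one (θ := θ) hφ hφc) hF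
    fun a ha b hb hab => ⟨a, left_mem_Icc.2 hab, ?_⟩
  calc φ b ^ θ - φ a ^ θ ≤ θ * φ a ^ (θ - 1) * (φ b - φ a) :=
        Real.rpow_sub_rpow_le_mul_sub hθ0 hθ1 (hφ a ha) (hφ b hb).le
    _ ≤ θ * φ a ^ (θ - 1) * ∫ τ in a..b, F τ := by
        gcongr
        · exact mul_nonneg hθ0 (Real.rpow_nonneg (hφ a ha).le _)
        · exact hsup a ha b hb hab

theorem integral_le_rpow_sub_rpow_of_integral_le_sub {θ s t : ℝ} {y F : ℝ → ℝ} (hθ0 : 0 ≤ θ)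
    (hθ1 : θ ≤ 1) (hst : s ≤ t) (hy : ∀ x ∈ Icc s t, 0 < y x) (hyc : ContinuousOn y (Icc s t))
    (hF : IntegrableOn F (Icc s t))
    (hsub : ∀ a ∈ Icc s t, ∀ b ∈ Icc s t, a ≤ b → ∫ τ in a..b, F τ ≤ y b - y a) :
    ∫ τ in s..t, θ * y τ ^ (θ - 1) * F τ ≤ y t ^ θ - y s ^ θ := by
  have hloc : ∀ a ∈ Icc s t, ∀ b ∈ Icc s t, a ≤ b → ∃ c ∈ Icc a b,
      -y b ^ θ - -y a ^ θ ≤ -(θ * y c ^ (θ - 1)) * ∫ τ in a..b, F τ := by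
    intro a ha b hb hab
    refine ⟨b, right_mem_Icc.2 hab, ?_⟩
    have hg : 0 ≤ θ * y b ^ (θ - 1) := mul_nonneg hθ0 (Real.rpow_nonneg (hy b hb).le _)
    have htangent := Real.rpow_sub_rpow_le_mul_sub hθ0 hθ1 (hy b hb) (hy a ha).le
    nlinarith [hsub a ha b hb hab]
  have key := sub_le_integral_mul_of_forall_sub_le_mul_integral (u := fun x => -y x ^ θ)
    (g := fun x => -(θ * y x ^ (θ - 1))) hst (continuousOn_mul_rpow_sub_one hy hyc).neg hF hloc
  simp only [neg_mul, intervalIntegral.integral_neg] at key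
  linarith

theorem rpow_sub_rpow_le_rpow_sub_rpow {θ a b : ℝ} {y φ G H : ℝ → ℝ} (hθ0 : 0 ≤ θ)
    (hθ1 : θ ≤ 1) (hab : a ≤ b) (hφ : ∀ x ∈ Icc a b, 0 < φ x) (hφy : ∀ x ∈ Icc a b, φ x ≤ y x)
    (hyc : ContinuousOn y (Icc a b)) (hφc : ContinuousOn φ (Icc a b))
    (hG : IntegrableOn G (Icc a b)) (hH : IntegrableOn H (Icc a b))
    (hsub : ∀ s ∈ Icc a b, ∀ t ∈ Icc a b, s ≤ t → ∫ τ in s..t, G τ ≤ y t - y s)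
    (hsup : ∀ s ∈ Icc a b, ∀ t ∈ Icc a b, s ≤ t → φ t - φ s ≤ ∫ τ in s..t, H τ)
    (hHG : ∀ x ∈ Icc a b, θ * φ x ^ (θ - 1) * H x ≤ θ * y x ^ (θ - 1) * G x) :
    y a ^ θ - φ a ^ θ ≤ y b ^ θ - φ b ^ θ := by
  have hy : ∀ x ∈ Icc a b, 0 < y x := fun x hx => (hφ x hx).trans_le (hφy x hx)
  have hint : ∀ {u F : ℝ → ℝ}, (∀ x ∈ Icc a b, 0 < u x) → ContinuousOn u (Icc a b) →
      IntegrableOn F (Icc a b) → IntervalIntegrable (fun x => θ * u x ^ (θ - 1) * F x) volume a b :=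
    fun hu huc hF => (intervalIntegrable_iff_integrableOn_Icc_of_le hab).2
      (hF.continuousOn_mul (continuousOn_mul_rpow_sub_one hu huc) isCompact_Icc)
  have hφθ := rpow_sub_rpow_le_integral_of_sub_le_integral hθ0 hθ1 hab hφ hφc hH hsup
  have hyθ := integral_le_rpow_sub_rpow_of_integral_le_sub hθ0 hθ1 hab hy hyc hG hsub
  have hmono := intervalIntegral.integral_mono_on hab (hint hφ hφc hH) (hint hy hyc hG) hHG
  linarith

/-- Each side is `k - f u ^ (θ - 1)` (for `u = x`, `z`), and `θ - 1 = -1/p < 0`. -/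
theorem mul_rpow_mul_rhs_le {p p' θ k f x z : ℝ} (hp : 1 < p) (hp' : p' = p / (p - 1))
    (hθ : θ = 1 - 1 / p) (hf : 0 ≤ f) (hx : 0 < x) (hxz : x ≤ z) :
    θ * x ^ (θ - 1) * (p' * (k * max x 0 ^ (1 / p) - f)) ≤
      θ * z ^ (θ - 1) * (p' * (k * max z 0 ^ (1 / p) - f)) := by
  have hrhs : ∀ u, 0 < u → θ * u ^ (θ - 1) * (p' * (k * max u 0 ^ (1 / p) - f)) =
      k - f * u ^ (θ - 1) := by
    intro u hu
    have hθp' : θ * p' = 1 := by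
      rw [hθ, hp']; field_simp [(by linarith : p - 1 ≠ 0)]
    have hpow : u ^ (θ - 1) * u ^ (1 / p) = 1 := by
      rw [← Real.rpow_add hu, hθ, show 1 - 1 / p - 1 + 1 / p = (0 : ℝ) by ring, Real.rpow_zero]
    rw [max_eq_left hu.le]
    linear_combination (k * u ^ (θ - 1) * u ^ (1 / p) - f * u ^ (θ - 1)) * hθp' + k * hpow
  rw [hrhs x hx, hrhs z (hx.trans_le hxz)]
  have : θ - 1 ≤ 0 := by rw [hθ]; linarith [one_div_pos.2 (zero_lt_one.trans hp)]
  linarith [mul_le_mul_of_nonneg_left (Real.rpow_le_rpow_of_nonpos hx hxz this) hf]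

theorem exists_mem_Ioc_le_forall_Ico_lt {f g : ℝ → ℝ} {a b : ℝ} (hf : ContinuousOn f (Icc a b))
    (hg : ContinuousOn g (Icc a b)) (ha : g a < f a) (hb : f b ≤ g b) (hab : a ≤ b) :
    ∃ T ∈ Ioc a b, f T ≤ g T ∧ ∀ x ∈ Ico a T, g x < f x := by
  set Z := {x ∈ Icc a b | f x ≤ g x}
  have hZ : IsClosed Z := isClosed_Icc.isClosed_le hf hg
  have hbdd : BddBelow Z := ⟨a, fun x hx => hx.1.1⟩
  obtain ⟨⟨haT, hTb⟩, hT⟩ : sInf Z ∈ Z := hZ.csInf_mem ⟨b, ⟨hab, le_rfl⟩, hb⟩ hbdd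
  refine ⟨sInf Z, ⟨haT.lt_of_ne ?_, hTb⟩, hT, fun x hx => ?_⟩
  · intro haT; rw [← haT] at hT; exact (hT.trans_lt ha).false
  · by_contra! hfg
    exact hx.2.not_ge (csInf_le hbdd ⟨⟨hx.1, hx.2.le.trans hTb⟩, hfg⟩)

theorem le_of_forall_mem_Ico_le {w : ℝ → ℝ} {s T c : ℝ} (hsT : s < T)
    (hw : ContinuousOn w (Icc s T)) (h : ∀ b ∈ Ico s T, c ≤ w b) : c ≤ w T :=
  ContinuousWithinAt.closure_le (f := fun _ => c)
    (by rw [closure_Ico hsT.ne]; exact right_mem_Icc.2 hsT.le)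
    continuousWithinAt_const ((hw _ (right_mem_Icc.2 hsT.le)).mono Ico_subset_Icc_self) h

theorem continuousOn_of_eq_neg_integral {F y : ℝ → ℝ} {a b : ℝ} (hab : a ≤ b)
    (hF : IntegrableOn F (Icc a b)) (hy : ∀ t ∈ Icc a b, y t = -∫ τ in t..b, F τ) :
    ContinuousOn y (Icc a b) := by
  have := intervalIntegral.continuousOn_primitive_interval_left (μ := volume)
    (by rwa [uIcc_of_le hab])
  rw [uIcc_of_le hab] at this
  exact this.neg.congr hy

theorem sub_eq_integral_of_eq_neg_integral {F y : ℝ → ℝ} {a b s t : ℝ}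
    (hF : IntegrableOn F (Icc a b)) (hy : ∀ t ∈ Icc a b, y t = -∫ τ in t..b, F τ)
    (hs : s ∈ Icc a b) (ht : t ∈ Icc a b) : y t - y s = ∫ τ in s..t, F τ := by
  have hint : ∀ u ∈ Icc a b, ∀ v ∈ Icc a b, IntervalIntegrable F volume u v :=
    fun u hu v hv => (hF.mono_set (uIcc_subset_Icc hu hv)).intervalIntegrable
  have hb : b ∈ Icc a b := ⟨hs.1.trans hs.2, le_rfl⟩
  rw [hy t ht, hy s hs, ← intervalIntegral.integral_add_adjacent_intervals (hint s hs t ht)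
    (hint t ht b hb)]
  ring

theorem stmt6_general (p p' c : ℝ) (hp : 1 < p) (hp' : p' = p / (p - 1))
    (h f y φ : ℝ → ℝ)
    (hfpos : ∀ t ∈ Set.Ioo (0 : ℝ) 1, 0 < f t)
    -- y is the Carathéodory solution of the backward IVP, positive on (0,1)
    (hFint : IntegrableOn
      (fun τ => p' * ((c - h τ) * (max (y τ) 0) ^ (1 / p) - f τ)) (Set.Icc 0 1))
    (hy1 : y 1 = 0)
    (hysol : ∀ t ∈ Set.Icc (0 : ℝ) 1,
      y t = -∫ τ in t..1, p' * ((c - h τ) * (max (y τ) 0) ^ (1 / p) - f τ))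
    (hypos : ∀ t ∈ Set.Ioo (0 : ℝ) 1, 0 < y t)
    -- φ is an absolutely continuous supersolution: φ > 0 on (0,1), φ(1) ≥ 0, P_c φ ≤ 0 a.e.
    (hφcont : ContinuousOn φ (Set.Icc 0 1))
    (hφpos : ∀ t ∈ Set.Ioo (0 : ℝ) 1, 0 < φ t)
    (hφ1 : 0 ≤ φ 1)
    (hφint : IntegrableOn
      (fun τ => p' * ((c - h τ) * (max (φ τ) 0) ^ (1 / p) - f τ)) (Set.Icc 0 1))
    (hφsuper : ∀ s ∈ Set.Icc (0 : ℝ) 1, ∀ t ∈ Set.Icc (0 : ℝ) 1, s ≤ t →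
      φ t - φ s ≤ ∫ τ in s..t, p' * ((c - h τ) * (max (φ τ) 0) ^ (1 / p) - f τ)) :
    ∀ t ∈ Set.Icc (0 : ℝ) 1, y t ≤ φ t := by
  intro t ht
  by_contra! hφy
  set θ := 1 - 1 / p with hθ
  have hθ0 : 0 < θ := by rw [hθ, sub_pos, div_lt_one (by linarith)]; exact hp
  have hθ1 : θ ≤ 1 := by linarith [one_div_pos.2 (zero_lt_one.trans hp)]
  have hyc := continuousOn_of_eq_neg_integral zero_le_one hFint hysol
  obtain ⟨T, ⟨htT, hT1⟩, hyφT, hbelow⟩ := exists_mem_Ioc_le_forall_Ico_lt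
    (hyc.mono (Icc_subset_Icc ht.1 le_rfl)) (hφcont.mono (Icc_subset_Icc ht.1 le_rfl)) hφy
    (hy1 ▸ hφ1) ht.2
  obtain ⟨s, hs⟩ : ∃ s, s ∈ Ioo t T := exists_between htT
  have hgap : ∀ b ∈ Ico s T, y s ^ θ - φ s ^ θ ≤ y b ^ θ - φ b ^ θ := by
    intro b hb
    have hsub : Icc s b ⊆ Ioo 0 1 := fun x hx =>
      ⟨ht.1.trans_lt (hs.1.trans_le hx.1), hx.2.trans_lt (hb.2.trans_le hT1)⟩
    have hsub' : Icc s b ⊆ Icc 0 1 := hsub.trans Ioo_subset_Icc_self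
    have hlt : ∀ x ∈ Icc s b, φ x < y x := fun x hx =>
      hbelow x ⟨hs.1.le.trans hx.1, hx.2.trans_lt hb.2⟩
    refine rpow_sub_rpow_le_rpow_sub_rpow hθ0.le hθ1 hb.1 (fun x hx => hφpos x (hsub hx))
      (fun x hx => (hlt x hx).le) (hyc.mono hsub') (hφcont.mono hsub') (hFint.mono_set hsub')
      (hφint.mono_set hsub') (fun u hu v hv _ => (sub_eq_integral_of_eq_neg_integral hFint hysol
        (hsub' hu) (hsub' hv)).ge) (fun u hu v hv huv => hφsuper u (hsub' hu) v (hsub' hv) huv)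
      fun x hx => mul_rpow_mul_rhs_le hp hp' hθ (hfpos x (hsub hx)).le (hφpos x (hsub hx))
        (hlt x hx).le
  have hgapT : y s ^ θ - φ s ^ θ ≤ y T ^ θ - φ T ^ θ :=
    le_of_forall_mem_Ico_le (w := fun x => y x ^ θ - φ x ^ θ) hs.2
      (((hyc.rpow_const fun _ _ => Or.inr hθ0.le).sub
        (hφcont.rpow_const fun _ _ => Or.inr hθ0.le)).mono
        (Icc_subset_Icc (ht.1.trans hs.1.le) hT1)) hgap
  have hs01 : s ∈ Ioo 0 1 := ⟨ht.1.trans_lt hs.1, hs.2.trans_le hT1⟩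
  have hpos : φ s ^ θ < y s ^ θ :=
    Real.rpow_lt_rpow (hφpos s hs01).le (hbelow s ⟨hs.1.le, hs.2⟩) hθ0
  have hyT : 0 ≤ y T := by
    rcases hT1.lt_or_eq with hT1 | rfl
    · exact (hypos T ⟨ht.1.trans_lt htT, hT1⟩).le
    · exact hy1.ge
  have hneg : y T ^ θ ≤ φ T ^ θ := Real.rpow_le_rpow hyT hyφT hθ0.le
  linarith

/-- Comparison with supersolutions: if `y_c` is the positive Carathéodory solution of the
backward problem `y' = p'[(c - h)(y⁺)^{1/p} - f]`, `y(1) = 0`, and `φ` is absolutely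
continuous, positive on `(0,1)`, with `φ(1) ≥ 0` and defect `P_c φ ≤ 0` a.e.
(encoded in integral form), then `y_c ≤ φ` on `[0,1]`. -/
theorem stmt6 (p p' c : ℝ) (hp : 1 < p) (hp' : p' = p / (p - 1))
    (h f y φ : ℝ → ℝ)
    (hhm : Measurable h) (hhb : ∃ M, ∀ t ∈ Set.Ioo (0 : ℝ) 1, |h t| ≤ M)
    (hfint : IntegrableOn f (Set.Ioo 0 1))
    (hfpos : ∀ t ∈ Set.Ioo (0 : ℝ) 1, 0 < f t)
    (hflsc : LowerSemicontinuousOn f (Set.Ioo 0 1))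
    -- y is the Carathéodory solution of the backward IVP, positive on (0,1)
    (hFint : IntegrableOn
      (fun τ => p' * ((c - h τ) * (max (y τ) 0) ^ (1 / p) - f τ)) (Set.Icc 0 1))
    (hy1 : y 1 = 0)
    (hysol : ∀ t ∈ Set.Icc (0 : ℝ) 1,
      y t = -∫ τ in t..1, p' * ((c - h τ) * (max (y τ) 0) ^ (1 / p) - f τ))
    (hypos : ∀ t ∈ Set.Ioo (0 : ℝ) 1, 0 < y t)
    -- φ is an absolutely continuous supersolution: φ > 0 on (0,1), φ(1) ≥ 0, P_c φ ≤ 0 a.e.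
    (hφcont : ContinuousOn φ (Set.Icc 0 1))
    (hφpos : ∀ t ∈ Set.Ioo (0 : ℝ) 1, 0 < φ t)
    (hφ1 : 0 ≤ φ 1)
    (hφint : IntegrableOn
      (fun τ => p' * ((c - h τ) * (max (φ τ) 0) ^ (1 / p) - f τ)) (Set.Icc 0 1))
    (hφsuper : ∀ s ∈ Set.Icc (0 : ℝ) 1, ∀ t ∈ Set.Icc (0 : ℝ) 1, s ≤ t →
      φ t - φ s ≤ ∫ τ in s..t, p' * ((c - h τ) * (max (φ τ) 0) ^ (1 / p) - f τ)) :
    ∀ t ∈ Set.Icc (0 : ℝ) 1, y t ≤ φ t :=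
  stmt6_general p p' c hp hp' h f y φ hfpos hFint hy1 hysol hypos hφcont hφpos hφ1 hφint hφsuper
end

section
/- Let p > 1, p' = p/(p-1), h : [0,1] → ℝ bounded and continuous at 0, f ∈ L^1(0,1) with f > 0 on (0,1). If y : [0,1] → ℝ is a positive (on (0,1)) absolutely continuous solution of y'(t) = p'[(c - h(t)) y(t)^{1/p} - f(t)] a.e. in (0,1) with y(0) = y(1) = 0, then c ≥ h(0). -/
/-!
If `c < h 0`, continuity of `h` at `0` makes the right-hand side
`p' ((c - h) y^{1/p} - f)` strictly negative on some interval `(0, t)`, since `p' > 0`,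
`y ≥ 0` and `f > 0` there. Integrating from `0` gives `y t < 0`, contradicting `y > 0` on `(0, 1)`.
-/

open MeasureTheory Set Filter Topology

lemma eventually_lt_nhdsGT_of_continuousWithinAt_Icc {h : ℝ → ℝ} {a b c : ℝ} (hab : a < b)
    (hh : ContinuousWithinAt h (Icc a b) a) (hc : c < h a) : ∀ᶠ τ in 𝓝[>] a, c < h τ := by
  have hGE : ∀ᶠ τ in 𝓝[≥] a, c < h τ := by
    rw [← nhdsWithin_Icc_eq_nhdsGE hab]
    exact hh.eventually (lt_mem_nhds hc)
  exact hGE.filter_mono (nhdsWithin_mono _ Ioi_subset_Ici_self)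

lemma mul_sub_mul_rpow_sub_neg {p' c hτ yτ fτ q : ℝ} (hp' : 0 < p') (hc : c < hτ)
    (hy : 0 ≤ yτ) (hf : 0 < fτ) : p' * ((c - hτ) * yτ ^ q - fτ) < 0 := by
  have hyq : 0 ≤ yτ ^ q := Real.rpow_nonneg hy q
  exact mul_neg_of_pos_of_neg hp' (by nlinarith)

lemma intervalIntegral_neg_of_neg_on {F : ℝ → ℝ} {a b : ℝ}
    (hF : IntervalIntegrable F volume a b) (hneg : ∀ x ∈ Ioo a b, F x < 0) (hab : a < b) :
    ∫ x in a..b, F x < 0 := by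
  have hpos := intervalIntegral.intervalIntegral_pos_of_pos_on hF.neg
    (fun x hx => neg_pos.mpr (hneg x hx)) hab
  rwa [Pi.neg_def, intervalIntegral.integral_neg, neg_pos] at hpos

theorem stmt8_general (p p' c : ℝ) (hp : 1 < p) (hp' : p' = p / (p - 1))
    (h f y : ℝ → ℝ)
    (hh0 : ContinuousWithinAt h (Set.Icc 0 1) 0)
    (hfpos : ∀ t ∈ Set.Ioo (0 : ℝ) 1, 0 < f t)
    (hFint : IntegrableOn
      (fun τ => p' * ((c - h τ) * (y τ) ^ (1 / p) - f τ)) (Set.Icc 0 1))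
    (hypos : ∀ t ∈ Set.Ioo (0 : ℝ) 1, 0 < y t)
    (hysol : ∀ t ∈ Set.Icc (0 : ℝ) 1,
      y t = ∫ τ in (0 : ℝ)..t, p' * ((c - h τ) * (y τ) ^ (1 / p) - f τ)) :
    h 0 ≤ c := by
  by_contra! hc
  have hp'pos : 0 < p' := hp' ▸ div_pos (by linarith) (by linarith)
  obtain ⟨t, ⟨ht0, ht⟩, hlt⟩ := (mem_nhdsGT_iff_exists_mem_Ioc_Ioo_subset
    (by norm_num : (0 : ℝ) < 1 / 2)).1
      (eventually_lt_nhdsGT_of_continuousWithinAt_Icc one_pos hh0 hc)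
  have ht1 : t < 1 := by linarith
  have hint : ∫ τ in (0 : ℝ)..t, p' * ((c - h τ) * (y τ) ^ (1 / p) - f τ) < 0 := by
    refine intervalIntegral_neg_of_neg_on ?_ (fun τ hτ => ?_) ht0
    · rw [intervalIntegrable_iff_integrableOn_Ioc_of_le ht0.le]
      exact hFint.mono_set (Ioc_subset_Icc_self.trans (Icc_subset_Icc_right ht1.le))
    · have hτ1 : τ ∈ Ioo (0 : ℝ) 1 := ⟨hτ.1, hτ.2.trans ht1⟩
      exact mul_sub_mul_rpow_sub_neg hp'pos (hlt hτ) (hypos τ hτ1).le (hfpos τ hτ1)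
  have := hypos t ⟨ht0, ht1⟩
  rw [hysol t ⟨ht0.le, ht1.le⟩] at this
  linarith

/-- Necessary condition `c ≥ h(0)` for the existence of a positive solution of the
boundary value problem `y' = p'[(c - h) y^{1/p} - f]`, `y(0) = 0 = y(1)`, with `h`
bounded measurable and continuous at `0` and `f > 0` integrable. -/
theorem stmt8 (p p' c : ℝ) (hp : 1 < p) (hp' : p' = p / (p - 1))
    (h f y : ℝ → ℝ)
    (hhm : Measurable h) (hhb : ∃ M, ∀ t ∈ Set.Icc (0 : ℝ) 1, |h t| ≤ M)
    (hh0 : ContinuousWithinAt h (Set.Icc 0 1) 0)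
    (hfint : IntegrableOn f (Set.Ioo 0 1))
    (hfpos : ∀ t ∈ Set.Ioo (0 : ℝ) 1, 0 < f t)
    (hFint : IntegrableOn
      (fun τ => p' * ((c - h τ) * (y τ) ^ (1 / p) - f τ)) (Set.Icc 0 1))
    (hy0 : y 0 = 0) (hy1 : y 1 = 0)
    (hypos : ∀ t ∈ Set.Ioo (0 : ℝ) 1, 0 < y t)
    (hysol : ∀ t ∈ Set.Icc (0 : ℝ) 1,
      y t = ∫ τ in (0 : ℝ)..t, p' * ((c - h τ) * (y τ) ^ (1 / p) - f τ)) :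
    h 0 ≤ c :=
  stmt8_general p p' c hp hp' h f y hh0 hfpos hFint hypos hysol
end

section
/- Let p > 1, p' = p/(p-1), h ∈ L^∞(0,1), f ∈ L^1(0,1) with f > 0 on (0,1). If y is a positive (on (0,1)) absolutely continuous solution of y'(t) = p'[(c - h(t)) y(t)^{1/p} - f(t)] a.e. on (0,1) with y(0) = y(1) = 0, then c - H(1) = ∫_0^1 f(t) y(t)^{-1/p} dt > 0, where H(1) = ∫_0^1 h(s) ds. In particular c > H(1). -/
/-!
Since `(y ^ (1 - 1/p))' = (1 - 1/p) y ^ (-1/p) y'` and `(1 - 1/p) p' = 1`, dividing the equation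
by `y ^ (1/p)` gives `(y ^ (1 - 1/p))' = (c - h) - f / y ^ (1/p)` almost everywhere. On a compact
subinterval of `(0, 1)` the solution is bounded away from `0`, so `y ^ (1 - 1/p)` is absolutely
continuous there and the fundamental theorem of calculus yields
`∫ f / y ^ (1/p) = ∫ (c - h) - [y ^ (1 - 1/p)]` over it. The left integrand is nonnegative and
the right-hand side is continuous in the endpoints up to `0` and `1`, so exhausting `(0, 1)`
gives integrability and the identity on `[0, 1]`, where the boundary term vanishes.
-/

open MeasureTheory Set Filter Topology
open scoped NNReal

namespace AbsolutelyContinuousOnInterval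

variable {X : Type*} [PseudoMetricSpace X] {a b : ℝ}

theorem congr {f g : ℝ → X} (hf : AbsolutelyContinuousOnInterval f a b)
    (hfg : EqOn f g (uIcc a b)) : AbsolutelyContinuousOnInterval g a b := by
  refine hf.congr' (eventually_inf_principal.2 (Eventually.of_forall fun E hE => ?_))
  exact Finset.sum_congr rfl fun i hi => by
    rw [hfg (hE.1 i hi).1, hfg (hE.1 i hi).2]

theorem _root_.LipschitzOnWith.comp_absolutelyContinuousOnInterval {Y : Type*}
    [PseudoMetricSpace Y] {φ : X → Y} {K : ℝ≥0} {s : Set X} {f : ℝ → X}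
    (hφ : LipschitzOnWith K φ s) (hf : AbsolutelyContinuousOnInterval f a b)
    (hfs : MapsTo f (uIcc a b) s) : AbsolutelyContinuousOnInterval (φ ∘ f) a b := by
  have hK : Tendsto (fun E : ℕ × (ℕ → ℝ × ℝ) =>
      (K : ℝ) * ∑ i ∈ Finset.range E.1, dist (f (E.2 i).1) (f (E.2 i).2))
      (totalLengthFilter ⊓ 𝓟 (disjWithin a b)) (𝓝 0) := by
    simpa only [mul_zero] using Tendsto.const_mul (K : ℝ) hf
  refine squeeze_zero' (Eventually.of_forall fun E => Finset.sum_nonneg fun i _ => dist_nonneg)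
    (eventually_inf_principal.2 (Eventually.of_forall fun E hE => ?_)) hK
  rw [Finset.mul_sum]
  exact Finset.sum_le_sum fun i hi =>
    hφ.dist_le_mul _ (hfs (hE.1 i hi).1) _ (hfs (hE.1 i hi).2)

theorem rpow_const {f : ℝ → ℝ} (hf : AbsolutelyContinuousOnInterval f a b)
    (hpos : ∀ x ∈ uIcc a b, 0 < f x) (r : ℝ) :
    AbsolutelyContinuousOnInterval (fun x => f x ^ r) a b := by
  have hlip : LocallyLipschitzOn (Ioi 0) fun x : ℝ => x ^ r :=
    ContDiffOn.locallyLipschitzOn (convex_Ioi 0) fun x hx =>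
      (Real.contDiffAt_rpow_const_of_ne (ne_of_gt hx)).contDiffWithinAt
  have himage : f '' uIcc a b ⊆ Ioi 0 := by
    rintro _ ⟨x, hx, rfl⟩
    exact hpos x hx
  obtain ⟨K, hK⟩ := (hlip.mono himage).exists_lipschitzOnWith_of_compact
    (isCompact_uIcc.image_of_continuousOn hf.continuousOn)
  exact hK.comp_absolutelyContinuousOnInterval hf (mapsTo_image f _)

theorem integral_mul_rpow_mul_eq_sub {f f' : ℝ → ℝ}
    (hf : AbsolutelyContinuousOnInterval f a b) (hpos : ∀ x ∈ uIcc a b, 0 < f x)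
    (hf' : ∀ᵐ x, x ∈ uIcc a b → HasDerivAt f (f' x) x) (r : ℝ) :
    ∫ x in a..b, r * f x ^ (r - 1) * f' x = f b ^ r - f a ^ r := by
  rw [← (hf.rpow_const hpos r).integral_deriv_eq_sub]
  refine intervalIntegral.integral_congr_ae ?_
  filter_upwards [hf'] with x hx hxab
  have hx' := uIoc_subset_uIcc hxab
  rw [((hx hx').rpow_const (Or.inl (hpos x hx').ne')).deriv]
  ring

end AbsolutelyContinuousOnInterval

theorem ae_hasDerivAt_of_eq_integral {E : Type*} [NormedAddCommGroup E] [NormedSpace ℝ E]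
    [CompleteSpace E] {F y : ℝ → E} {a b : ℝ} (hF : IntervalIntegrable F volume a b)
    (hy : ∀ t ∈ Icc a b, y t = ∫ τ in a..t, F τ) :
    ∀ᵐ x, x ∈ Ioo a b → HasDerivAt y (F x) x := by
  filter_upwards [hF.ae_hasDerivAt_integral] with x hx hxab
  have hab : a ≤ b := (hxab.1.trans hxab.2).le
  have hxab' : x ∈ uIcc a b := by
    rw [uIcc_of_le hab]
    exact Ioo_subset_Icc_self hxab
  refine (hx hxab' a left_mem_uIcc).congr_of_eventuallyEq ?_
  filter_upwards [Ioo_mem_nhds hxab.1 hxab.2] with t ht using hy t (Ioo_subset_Icc_self ht)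

section ImproperIntegral

variable {G ψ : ℝ → ℝ} {a b : ℝ}

theorem intervalIntegrable_of_nonneg_of_forall_integral_eq_sub (hab : a < b)
    (hG : ∀ x ∈ Ioo a b, 0 ≤ G x) (hψ : ContinuousOn ψ (Icc a b))
    (hGloc : ∀ s ∈ Ioo a b, ∀ t ∈ Ioo a b, IntervalIntegrable G volume s t)
    (hGψ : ∀ s ∈ Ioo a b, ∀ t ∈ Ioo a b, ∫ x in s..t, G x = ψ t - ψ s) :
    IntervalIntegrable G volume a b := by
  have hm : (a + b) / 2 ∈ Ioo a b := ⟨left_lt_add_div_two.2 hab, add_div_two_lt_right.2 hab⟩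
  obtain ⟨u, -, hu, hua⟩ := exists_seq_strictAnti_tendsto' hm.1
  obtain ⟨v, -, hv, hvb⟩ := exists_seq_strictMono_tendsto' hm.2
  have hu' (n : ℕ) : u n ∈ Ioo a b := ⟨(hu n).1, (hu n).2.trans hm.2⟩
  have hv' (n : ℕ) : v n ∈ Ioo a b := ⟨hm.1.trans (hv n).1, (hv n).2⟩
  have hψw {w : ℕ → ℝ} {x : ℝ} (hx : x ∈ Icc a b) (hw : ∀ n, w n ∈ Ioo a b)
      (hwx : Tendsto w atTop (𝓝 x)) : Tendsto (fun n => ψ (w n)) atTop (𝓝 (ψ x)) :=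
    (hψ x hx).tendsto.comp
      (tendsto_nhdsWithin_iff.2 ⟨hwx, .of_forall fun n => Ioo_subset_Icc_self (hw n)⟩)
  obtain ⟨I, hI⟩ := ((hψw (right_mem_Icc.2 hab.le) hv' hvb).sub
    (hψw (left_mem_Icc.2 hab.le) hu' hua)).isBoundedUnder_le
  rw [intervalIntegrable_iff_integrableOn_Ioc_of_le hab.le]
  refine integrableOn_Ioc_of_intervalIntegral_norm_bounded (I := I)
    (fun n => (hGloc _ (hu' n) _ (hv' n)).1) hua hvb ((eventually_map.1 hI).mono fun n hn => ?_)
  have hnorm : ∫ x in Ioc (u n) (v n), ‖G x‖ = ∫ x in u n..v n, G x := by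
    rw [intervalIntegral.integral_of_le ((hu n).2.trans (hv n).1).le]
    refine setIntegral_congr_fun measurableSet_Ioc fun x hx => Real.norm_of_nonneg (hG x ?_)
    exact ⟨(hu' n).1.trans hx.1, hx.2.trans_lt (hv' n).2⟩
  rw [hnorm, hGψ _ (hu' n) _ (hv' n)]
  exact hn

theorem integral_eq_sub_of_forall_integral_eq_sub (hab : a < b)
    (hG : IntervalIntegrable G volume a b) (hψ : ContinuousOn ψ (Icc a b))
    (hGψ : ∀ s ∈ Ioo a b, ∀ t ∈ Ioo a b, ∫ x in s..t, G x = ψ t - ψ s) :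
    ∫ x in a..b, G x = ψ b - ψ a := by
  set χ : ℝ → ℝ := fun x => (∫ y in a..x, G y) - ψ x
  have hGi : ∀ x ∈ Icc a b, IntervalIntegrable G volume a x := fun x hx =>
    hG.mono_set (by rw [uIcc_of_le hab.le, uIcc_of_le hx.1]; exact Icc_subset_Icc_right hx.2)
  have hχ : ContinuousOn χ (Icc a b) := by
    refine ContinuousOn.sub ?_ hψ
    simpa only [uIcc_of_le hab.le] using
      intervalIntegral.continuousOn_primitive_interval' hG left_mem_uIcc
  have hm : (a + b) / 2 ∈ Ioo a b := ⟨left_lt_add_div_two.2 hab, add_div_two_lt_right.2 hab⟩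
  have hconst : EqOn χ (fun _ => χ ((a + b) / 2)) (Ioo a b) := by
    intro x hx
    have := hGψ _ hm x hx
    rw [← intervalIntegral.integral_interval_sub_left (hGi x (Ioo_subset_Icc_self hx))
      (hGi _ (Ioo_subset_Icc_self hm))] at this
    simp only [χ]
    linarith
  have hext := hconst.of_subset_closure hχ continuousOn_const Ioo_subset_Icc_self
    (closure_Ioo hab.ne).ge
  have := (hext (right_mem_Icc.2 hab.le)).trans (hext (left_mem_Icc.2 hab.le)).symm
  simp only [χ, intervalIntegral.integral_same] at this
  linarith

end ImproperIntegral

theorem IntervalIntegrable.div_rpow {f y : ℝ → ℝ} {a b : ℝ}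
    (hf : IntervalIntegrable f volume a b) (hy : ContinuousOn y (uIcc a b))
    (hpos : ∀ x ∈ uIcc a b, 0 < y x) (q : ℝ) :
    IntervalIntegrable (fun x => f x / y x ^ q) volume a b := by
  simpa only [div_eq_mul_inv, Pi.inv_apply] using hf.mul_continuousOn
    ((hy.rpow_const fun x hx => Or.inl (hpos x hx).ne').inv₀ fun x hx =>
      (Real.rpow_pos_of_pos (hpos x hx) q).ne')

theorem integral_div_rpow_eq_of_hasDerivAt_of_pos {y f g : ℝ → ℝ} {a b p' q : ℝ}
    (hq : (1 - q) * p' = 1) (hy : AbsolutelyContinuousOnInterval y a b)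
    (hpos : ∀ x ∈ uIcc a b, 0 < y x)
    (hy' : ∀ᵐ x, x ∈ uIcc a b → HasDerivAt y (p' * (g x * y x ^ q - f x)) x)
    (hg : IntervalIntegrable g volume a b) (hf : IntervalIntegrable f volume a b) :
    ∫ x in a..b, f x / y x ^ q = (∫ x in a..b, g x) - (y b ^ (1 - q) - y a ^ (1 - q)) := by
  have hG := hf.div_rpow hy.continuousOn hpos q
  have hderiv : ∀ x ∈ uIcc a b,
      (1 - q) * y x ^ (1 - q - 1) * (p' * (g x * y x ^ q - f x)) = g x - f x / y x ^ q := by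
    intro x hx
    have hyq : y x ^ q ≠ 0 := (Real.rpow_pos_of_pos (hpos x hx) q).ne'
    rw [show 1 - q - 1 = -q by ring, Real.rpow_neg (hpos x hx).le]
    field_simp
    linear_combination (g x * y x ^ q - f x) * hq
  rw [← hy.integral_mul_rpow_mul_eq_sub hpos hy' (1 - q), intervalIntegral.integral_congr hderiv,
    intervalIntegral.integral_sub hg hG]
  ring

theorem intervalIntegrable_div_rpow_and_integral_eq_of_hasDerivAt {y f g : ℝ → ℝ}
    {a b p' q : ℝ}
    (hq : (1 - q) * p' = 1) (hq₀ : 0 ≤ 1 - q) (hab : a < b)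
    (hy : AbsolutelyContinuousOnInterval y a b) (hpos : ∀ x ∈ Ioo a b, 0 < y x)
    (hy' : ∀ᵐ x, x ∈ Ioo a b → HasDerivAt y (p' * (g x * y x ^ q - f x)) x)
    (hg : IntervalIntegrable g volume a b) (hf : IntervalIntegrable f volume a b)
    (hf₀ : ∀ x ∈ Ioo a b, 0 ≤ f x) :
    IntervalIntegrable (fun x => f x / y x ^ q) volume a b ∧
      ∫ x in a..b, f x / y x ^ q = (∫ x in a..b, g x) - (y b ^ (1 - q) - y a ^ (1 - q)) := by
  have hab' : uIcc a b = Icc a b := uIcc_of_le hab.le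
  set ψ : ℝ → ℝ := fun t => (∫ s in a..t, g s) - y t ^ (1 - q)
  have hψ : ContinuousOn ψ (Icc a b) := by
    rw [← hab']
    exact (intervalIntegral.continuousOn_primitive_interval' hg left_mem_uIcc).sub
      (hy.continuousOn.rpow_const fun _ _ => Or.inr hq₀)
  have hsub : ∀ s ∈ Ioo a b, ∀ t ∈ Ioo a b, uIcc s t ⊆ Ioo a b := fun s hs t ht =>
    ordConnected_Ioo.uIcc_subset hs ht
  have hsub' : ∀ s ∈ Ioo a b, ∀ t ∈ Ioo a b, uIcc s t ⊆ uIcc a b := fun s hs t ht =>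
    hab' ▸ (hsub s hs t ht).trans Ioo_subset_Icc_self
  have hGloc : ∀ s ∈ Ioo a b, ∀ t ∈ Ioo a b,
      IntervalIntegrable (fun x => f x / y x ^ q) volume s t := fun s hs t ht =>
    (hf.mono_set (hsub' s hs t ht)).div_rpow (hy.continuousOn.mono (hsub' s hs t ht))
      (fun x hx => hpos x (hsub s hs t ht hx)) q
  have hlocal : ∀ s ∈ Ioo a b, ∀ t ∈ Ioo a b,
      ∫ x in s..t, f x / y x ^ q = ψ t - ψ s := by
    intro s hs t ht
    have hg₀ : ∀ r ∈ Ioo a b, IntervalIntegrable g volume a r := fun r hr =>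
      hg.mono_set (uIcc_subset_uIcc left_mem_uIcc (hab' ▸ Ioo_subset_Icc_self hr))
    rw [integral_div_rpow_eq_of_hasDerivAt_of_pos hq (hy.mono (hsub' s hs t ht))
      (fun x hx => hpos x (hsub s hs t ht hx)) (hy'.mono fun x hx hx' => hx (hsub s hs t ht hx'))
      (hg.mono_set (hsub' s hs t ht)) (hf.mono_set (hsub' s hs t ht)),
      ← intervalIntegral.integral_interval_sub_left (hg₀ t ht) (hg₀ s hs)]
    ring
  have hGint := intervalIntegrable_of_nonneg_of_forall_integral_eq_sub hab
    (fun x hx => div_nonneg (hf₀ x hx) (Real.rpow_pos_of_pos (hpos x hx) q).le) hψ hGloc hlocal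
  refine ⟨hGint, ?_⟩
  rw [integral_eq_sub_of_forall_integral_eq_sub hab hGint hψ hlocal]
  simp only [ψ, intervalIntegral.integral_same]
  ring

/-- For a positive solution `y` of the boundary value problem
`y' = p'[(c - h) y^{1/p} - f]`, `y(0) = 0 = y(1)`, one has
`c - H(1) = ∫_0^1 f(t) y(t)^{-1/p} dt > 0` where `H(1) = ∫_0^1 h`; in particular
`c > H(1)`. -/
theorem stmt9 (p p' c : ℝ) (hp : 1 < p) (hp' : p' = p / (p - 1))
    (h f y : ℝ → ℝ)
    (hhm : Measurable h) (hhb : ∃ M, ∀ t ∈ Set.Ioo (0 : ℝ) 1, |h t| ≤ M)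
    (hfint : IntegrableOn f (Set.Ioo 0 1))
    (hfpos : ∀ t ∈ Set.Ioo (0 : ℝ) 1, 0 < f t)
    (hFint : IntegrableOn
      (fun τ => p' * ((c - h τ) * (y τ) ^ (1 / p) - f τ)) (Set.Icc 0 1))
    (hy0 : y 0 = 0) (hy1 : y 1 = 0)
    (hypos : ∀ t ∈ Set.Ioo (0 : ℝ) 1, 0 < y t)
    (hysol : ∀ t ∈ Set.Icc (0 : ℝ) 1,
      y t = ∫ τ in (0 : ℝ)..t, p' * ((c - h τ) * (y τ) ^ (1 / p) - f τ)) :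
    c - (∫ s in (0 : ℝ)..1, h s) = (∫ t in (0 : ℝ)..1, f t / (y t) ^ (1 / p)) ∧
    (0 < ∫ t in (0 : ℝ)..1, f t / (y t) ^ (1 / p)) ∧
    (∫ s in (0 : ℝ)..1, h s) < c := by
  have hq : (1 - 1 / p) * p' = 1 := by
    rw [hp']
    field_simp [(by linarith : p - 1 ≠ 0)]
  have hq₀ : 0 < 1 - 1 / p := by
    rw [sub_pos, div_lt_one (by linarith)]
    exact hp
  have hF : IntervalIntegrable (fun τ => p' * ((c - h τ) * y τ ^ (1 / p) - f τ)) volume 0 1 :=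
    (intervalIntegrable_iff_integrableOn_Icc_of_le zero_le_one).2 hFint
  have hyAC : AbsolutelyContinuousOnInterval y 0 1 :=
    (hF.absolutelyContinuousOnInterval_intervalIntegral left_mem_uIcc).congr fun t ht =>
      (hysol t (uIcc_of_le (zero_le_one' ℝ) ▸ ht)).symm
  have hh : IntervalIntegrable h volume 0 1 := by
    obtain ⟨M, hM⟩ := hhb
    refine (intervalIntegrable_iff_integrableOn_Ioo_of_le zero_le_one).2
      (Measure.integrableOn_of_bounded (M := M) (by simp) hhm.aestronglyMeasurable ?_)
    exact (ae_restrict_iff' measurableSet_Ioo).2 (ae_of_all _ hM)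
  have hf : IntervalIntegrable f volume 0 1 :=
    (intervalIntegrable_iff_integrableOn_Ioo_of_le zero_le_one).2 hfint
  obtain ⟨hGint, hG⟩ := intervalIntegrable_div_rpow_and_integral_eq_of_hasDerivAt hq hq₀.le
    (zero_lt_one' ℝ) hyAC hypos (ae_hasDerivAt_of_eq_integral hF hysol)
    (intervalIntegrable_const.sub hh) hf fun t ht => (hfpos t ht).le
  rw [hy0, hy1, Real.zero_rpow hq₀.ne', sub_self, sub_zero,
    intervalIntegral.integral_sub intervalIntegrable_const hh, intervalIntegral.integral_const,
    sub_zero, one_smul] at hG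
  have hpos := intervalIntegral.intervalIntegral_pos_of_pos_on hGint
    (fun t ht => div_pos (hfpos t ht) (Real.rpow_pos_of_pos (hypos t ht) _)) zero_lt_one
  exact ⟨hG.symm, hpos, by linarith⟩
end

section
/- With the notation of the generalized traveling-wave solution (continuous U : ℝ → [0,1], continuous flux v with v(±∞)=0, the integral identity, boundary conditions U(-∞)=1, U(+∞)=0, and g > 0 on (0,1)): if ξ ∈ ℝ satisfies U(ξ) = 0, then U(z) = 0 for all z ≥ ξ; and if U(ξ) = 1, then U(z) = 1 for all z ≤ ξ. -/
/-!
Let `U ξ ∈ {0, 1}`, so that `v ξ = 0`. The integral identity between `ξ` and `w` writes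
`∫_ξ^w g(U)` through `v`, `U` and `H ∘ U`, which tend to their values at `ξ` as `w → +∞`
(if `U ξ = 0`) or `w → -∞` (if `U ξ = 1`); hence `∫_ξ^w g(U) → 0`. Since `g(U) ≥ 0`, this
primitive is monotone in `w`, so it vanishes on the whole half-line and its derivative `g(U)`
vanishes there. Thus `U` only takes the values `0` and `1` on a connected half-line, and is
constant on it.
-/

open MeasureTheory Set Filter Topology

theorem monotone_integral_of_nonneg {k : ℝ → ℝ} (hk : Continuous k) (hk0 : ∀ x, 0 ≤ k x)
    (ξ : ℝ) : Monotone fun w => ∫ x in ξ..w, k x := by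
  intro a b hab
  dsimp only
  rw [← intervalIntegral.integral_add_adjacent_intervals (hk.intervalIntegrable ξ a)
    (hk.intervalIntegrable a b)]
  exact le_add_of_nonneg_right (intervalIntegral.integral_nonneg hab fun x _ => hk0 x)

theorem eq_zero_of_integral_eventuallyEq_zero {k : ℝ → ℝ} (hk : Continuous k) {ξ τ : ℝ}
    (hF : (fun w => ∫ x in ξ..w, k x) =ᶠ[𝓝 τ] fun _ => 0) : k τ = 0 := by
  rw [← hk.deriv_integral k ξ τ, hF.deriv_eq, deriv_const]

theorem eq_zero_of_tendsto_integral_atTop {k : ℝ → ℝ} (hk : Continuous k)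
    (hk0 : ∀ x, 0 ≤ k x) {ξ : ℝ} (hlim : Tendsto (fun w => ∫ x in ξ..w, k x) atTop (𝓝 0))
    {τ : ℝ} (hτ : ξ < τ) : k τ = 0 := by
  refine eq_zero_of_integral_eventuallyEq_zero (ξ := ξ) hk ?_
  filter_upwards [Ioi_mem_nhds hτ] with w hw
  exact le_antisymm ((monotone_integral_of_nonneg hk hk0 ξ).ge_of_tendsto hlim w)
    (intervalIntegral.integral_nonneg (le_of_lt hw) fun x _ => hk0 x)

theorem eq_zero_of_tendsto_integral_atBot {k : ℝ → ℝ} (hk : Continuous k)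
    (hk0 : ∀ x, 0 ≤ k x) {ξ : ℝ} (hlim : Tendsto (fun w => ∫ x in ξ..w, k x) atBot (𝓝 0))
    {τ : ℝ} (hτ : τ < ξ) : k τ = 0 := by
  refine eq_zero_of_integral_eventuallyEq_zero (ξ := ξ) hk ?_
  filter_upwards [Iio_mem_nhds hτ] with w hw
  refine le_antisymm ?_ ((monotone_integral_of_nonneg hk hk0 ξ).le_of_tendsto hlim w)
  rw [intervalIntegral.integral_symm, neg_nonpos]
  exact intervalIntegral.integral_nonneg (le_of_lt hw) fun x _ => hk0 x

theorem continuousOn_primitive_of_bounded {h : ℝ → ℝ} (hhm : Measurable h) {a b : ℝ}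
    (hhb : ∃ M, ∀ s ∈ Icc a b, |h s| ≤ M) (ha : a ≤ b) :
    ContinuousOn (fun s => ∫ τ in a..s, h τ) (Icc a b) := by
  obtain ⟨M, hM⟩ := hhb
  rw [← uIcc_of_le ha]
  refine intervalIntegral.continuousOn_primitive_interval
    (Measure.integrableOn_of_bounded (M := M) measure_Icc_lt_top.ne
      hhm.aestronglyMeasurable ?_)
  filter_upwards [ae_restrict_mem measurableSet_uIcc] with s hs
  rw [uIcc_of_le ha] at hs
  exact hM s hs

theorem nonneg_of_pos_on_Ioo {g : ℝ → ℝ} (hg0 : g 0 = 0) (hg1 : g 1 = 0)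
    (hgpos : ∀ s ∈ Ioo (0 : ℝ) 1, 0 < g s) {s : ℝ} (hs : s ∈ Icc (0 : ℝ) 1) : 0 ≤ g s := by
  rcases hs.1.eq_or_lt with rfl | hs0
  · exact hg0.ge
  rcases hs.2.eq_or_lt with rfl | hs1
  · exact hg1.ge
  exact (hgpos s ⟨hs0, hs1⟩).le

theorem eq_zero_or_eq_one_of_apply_eq_zero {g : ℝ → ℝ} (hgpos : ∀ s ∈ Ioo (0 : ℝ) 1, 0 < g s)
    {s : ℝ} (hs : s ∈ Icc (0 : ℝ) 1) (hgs : g s = 0) : s = 0 ∨ s = 1 := by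
  by_contra! hne
  exact (hgpos s ⟨lt_of_le_of_ne hs.1 hne.1.symm, lt_of_le_of_ne hs.2 hne.2⟩).ne' hgs

theorem eq_of_mapsTo_zero_one {U : ℝ → ℝ} {a b : ℝ} (hab : a ≤ b)
    (hU : ContinuousOn U (Icc a b)) (h01 : MapsTo U (Icc a b) {0, 1}) : U a = U b :=
  isPreconnected_Icc.constant_of_mapsTo (toFinite _).isDiscrete hU h01
    (left_mem_Icc.2 hab) (right_mem_Icc.2 hab)

theorem tendsto_integral_of_identity {c : ℝ} {g H U v : ℝ → ℝ}
    (hid : ∀ z w : ℝ, v w - v z + c * (U w - U z) - (H (U w) - H (U z))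
        + (∫ τ in z..w, g (U τ)) = 0)
    (hUrange : ∀ z, U z ∈ Icc (0 : ℝ) 1) (hH : ContinuousOn H (Icc 0 1)) {l : Filter ℝ} {ξ : ℝ}
    (hUl : Tendsto U l (𝓝 (U ξ))) (hvl : Tendsto v l (𝓝 (v ξ))) :
    Tendsto (fun w => ∫ τ in ξ..w, g (U τ)) l (𝓝 0) := by
  have hHU : Tendsto (fun w => H (U w)) l (𝓝 (H (U ξ))) :=
    (hH _ (hUrange ξ)).tendsto.comp
      (tendsto_nhdsWithin_iff.2 ⟨hUl, Eventually.of_forall hUrange⟩)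
  have hlim := ((tendsto_const_nhds (x := v ξ)).sub hvl).add
    (((tendsto_const_nhds (x := U ξ)).sub hUl).const_mul c) |>.add
    (hHU.sub (tendsto_const_nhds (x := H (U ξ))))
  simp only [sub_self, mul_zero, add_zero] at hlim
  refine hlim.congr fun w => ?_
  linarith [hid ξ w]

theorem stmt17_general (c : ℝ) (g h H U v : ℝ → ℝ)
    (hg : ContinuousOn g (Set.Icc 0 1)) (hg0 : g 0 = 0) (hg1 : g 1 = 0)
    (hgpos : ∀ s ∈ Set.Ioo (0 : ℝ) 1, 0 < g s)
    (hhm : Measurable h) (hhb : ∃ M, ∀ s ∈ Set.Icc (0 : ℝ) 1, |h s| ≤ M)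
    (hH : ∀ s, H s = ∫ τ in (0 : ℝ)..s, h τ)
    (hU : Continuous U) (hUrange : ∀ z, U z ∈ Set.Icc (0 : ℝ) 1)
    (hUbot : Tendsto U atBot (nhds 1)) (hUtop : Tendsto U atTop (nhds 0))
    (hvbot : Tendsto v atBot (nhds 0)) (hvtop : Tendsto v atTop (nhds 0))
    (hveq : ∀ ξ, (U ξ = 0 ∨ U ξ = 1) → v ξ = 0)
    (hid : ∀ z w : ℝ,
      v w - v z + c * (U w - U z) - (H (U w) - H (U z))
        + (∫ τ in z..w, g (U τ)) = 0) :
    ∀ ξ : ℝ,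
      (U ξ = 0 → ∀ z, ξ ≤ z → U z = 0) ∧
      (U ξ = 1 → ∀ z, z ≤ ξ → U z = 1) := by
  have hHcont : ContinuousOn H (Icc 0 1) := by
    rw [show H = _ from funext hH]
    exact continuousOn_primitive_of_bounded hhm hhb zero_le_one
  have hk : Continuous fun τ => g (U τ) := hg.comp_continuous hU hUrange
  have hk0 : ∀ τ, 0 ≤ g (U τ) := fun τ => nonneg_of_pos_on_Ioo hg0 hg1 hgpos (hUrange τ)
  have h01 : ∀ τ, g (U τ) = 0 → U τ ∈ ({0, 1} : Set ℝ) := fun τ hτ =>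
    eq_zero_or_eq_one_of_apply_eq_zero hgpos (hUrange τ) hτ
  intro ξ
  constructor
  · intro hUξ z hz
    have hvξ := hveq ξ (Or.inl hUξ)
    have hlim := tendsto_integral_of_identity hid hUrange hHcont (l := atTop) (ξ := ξ)
      (hUξ ▸ hUtop) (hvξ ▸ hvtop)
    refine hUξ ▸ (eq_of_mapsTo_zero_one hz hU.continuousOn fun τ hτ => ?_).symm
    rcases hτ.1.eq_or_lt with rfl | hlt
    · exact Or.inl hUξ
    · exact h01 τ (eq_zero_of_tendsto_integral_atTop hk hk0 hlim hlt)
  · intro hUξ z hz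
    have hvξ := hveq ξ (Or.inr hUξ)
    have hlim := tendsto_integral_of_identity hid hUrange hHcont (l := atBot) (ξ := ξ)
      (hUξ ▸ hUbot) (hvξ ▸ hvbot)
    refine hUξ ▸ eq_of_mapsTo_zero_one hz hU.continuousOn fun τ hτ => ?_
    rcases hτ.2.eq_or_lt with rfl | hlt
    · exact Or.inr hUξ
    · exact h01 τ (eq_zero_of_tendsto_integral_atBot hk hk0 hlim hlt)

/-- For a generalized traveling-wave solution `U` (with flux `v`, vanishing where
`U ∈ {0,1}`): if `U(ξ) = 0` then `U ≡ 0` on `[ξ,∞)`, and if `U(ξ) = 1` then `U ≡ 1`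
on `(-∞,ξ]`. -/
theorem stmt17 (c : ℝ) (g h H U v : ℝ → ℝ)
    (hg : ContinuousOn g (Set.Icc 0 1)) (hg0 : g 0 = 0) (hg1 : g 1 = 0)
    (hgpos : ∀ s ∈ Set.Ioo (0 : ℝ) 1, 0 < g s)
    (hhm : Measurable h) (hhb : ∃ M, ∀ s ∈ Set.Icc (0 : ℝ) 1, |h s| ≤ M)
    (hH : ∀ s, H s = ∫ τ in (0 : ℝ)..s, h τ)
    (hU : Continuous U) (hUrange : ∀ z, U z ∈ Set.Icc (0 : ℝ) 1)
    (hUbot : Tendsto U atBot (nhds 1)) (hUtop : Tendsto U atTop (nhds 0))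
    (hv : Continuous v)
    (hvbot : Tendsto v atBot (nhds 0)) (hvtop : Tendsto v atTop (nhds 0))
    (hveq : ∀ ξ, (U ξ = 0 ∨ U ξ = 1) → v ξ = 0)
    (hid : ∀ z w : ℝ,
      v w - v z + c * (U w - U z) - (H (U w) - H (U z))
        + (∫ τ in z..w, g (U τ)) = 0) :
    ∀ ξ : ℝ,
      (U ξ = 0 → ∀ z, ξ ≤ z → U z = 0) ∧
      (U ξ = 1 → ∀ z, z ≤ ξ → U z = 1) :=
  stmt17_general c g h H U v hg hg0 hg1 hgpos hhm hhb hH hU hUrange hUbot hUtop hvbot hvtop hveq hid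
end
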